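/- Let B be symmetric positive definite, X ∈ ℝ^{n×p} with XᵀBX = I, and G ∈ ℝ^{n×p} with XᵀG symmetric. Then tr(ZᵀG) = 0 for all Z with ZᵀBX + XᵀBZ = 0 if and only if (I − BXXᵀ)G = 0. -/

import Mathlib

/-! If `G = BXXᵀG` and `ZᵀBX` is skew, then `tr(ZᵀG) = tr((ZᵀBX)(XᵀG))` is the trace of a skew
matrix times the symmetric matrix `XᵀG`, hence zero. Conversely, `W = (I - BXXᵀ)G` satisfies
`XᵀW = 0`, so `Z = B⁻¹W` is admissible, and `tr(ZᵀG) = tr(WᵀB⁻¹W)` forces `W = 0` because `B⁻¹` is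
positive definite. -/

open Matrix

section

variable {m n R 𝕜 : Type*} [Fintype m] [Fintype n]

namespace Matrix

theorem trace_mul_eq_zero_of_transpose_eq_neg [CommRing R] [IsAddTorsionFree R]
    {A S : Matrix n n R} (hA : Aᵀ = -A) (hS : S.IsSymm) : (A * S).trace = 0 :=
  self_eq_neg.mp <| calc
    (A * S).trace = (A * S)ᵀ.trace := (trace_transpose _).symm
    _ = (S * -A).trace := by rw [transpose_mul, hS, hA]
    _ = -(A * S).trace := by rw [mul_neg, trace_neg, trace_mul_comm]

theorem PosDef.conjTranspose_mul_mul_same_eq_zero_iff [Ring R] [PartialOrder R] [StarRing R]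
    {A : Matrix n n R} (hA : A.PosDef) {W : Matrix n m R} : Wᴴ * A * W = 0 ↔ W = 0 := by
  classical
  refine ⟨fun h ↦ ext_of_mulVec_single fun j ↦ ?_, fun h ↦ by simp [h]⟩
  by_contra hW
  have hquad : star (W *ᵥ Pi.single j 1) ⬝ᵥ (A *ᵥ (W *ᵥ Pi.single j 1))
      = star (Pi.single j 1) ⬝ᵥ ((Wᴴ * A * W) *ᵥ Pi.single j 1) := by
    rw [← mulVec_mulVec, ← mulVec_mulVec, dotProduct_mulVec _ Wᴴ, vecMul_conjTranspose, star_star]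
  rw [zero_mulVec] at hW
  simpa [h] using (hA.dotProduct_mulVec_pos hW).trans_eq hquad

open scoped ComplexOrder in
theorem PosDef.trace_conjTranspose_mul_mul_same_eq_zero_iff [RCLike 𝕜]
    {A : Matrix n n 𝕜} (hA : A.PosDef) {W : Matrix n m 𝕜} : (Wᴴ * A * W).trace = 0 ↔ W = 0 := by
  rw [(hA.posSemidef.conjTranspose_mul_mul_same W).trace_eq_zero_iff,
    hA.conjTranspose_mul_mul_same_eq_zero_iff]

theorem transpose_mul_one_sub_mul_mul_transpose [Ring R] [DecidableEq m] [DecidableEq n]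
    {B : Matrix n n R} {X : Matrix n m R}
    (hX : Xᵀ * B * X = 1) : Xᵀ * (1 - B * X * Xᵀ) = 0 := by
  rw [Matrix.mul_sub, Matrix.mul_one, ← Matrix.mul_assoc, ← Matrix.mul_assoc, hX, Matrix.one_mul,
    sub_self]

end Matrix

theorem variational_of_projected [CommRing R] [IsAddTorsionFree R] [DecidableEq n]
    {B : Matrix n n R} (hB : B.IsSymm) {X G : Matrix n m R} (hsym : Xᵀ * G = Gᵀ * X)
    (hG : (1 - B * X * Xᵀ) * G = 0) {Z : Matrix n m R} (hZ : Zᵀ * B * X + Xᵀ * B * Z = 0) :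
    (Zᵀ * G).trace = 0 := by
  have hGrange : G = B * X * (Xᵀ * G) := by
    rw [Matrix.sub_mul, Matrix.one_mul, sub_eq_zero, Matrix.mul_assoc] at hG
    exact hG
  have hskew : (Zᵀ * B * X)ᵀ = -(Zᵀ * B * X) := by
    rw [transpose_mul, transpose_mul, transpose_transpose, hB, ← Matrix.mul_assoc]
    exact eq_neg_of_add_eq_zero_right hZ
  have hS : (Xᵀ * G).IsSymm := by
    rw [IsSymm, transpose_mul, transpose_transpose, hsym]
  calc (Zᵀ * G).trace = (Zᵀ * B * X * (Xᵀ * G)).trace := by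
        conv_lhs => rw [hGrange]
        simp only [Matrix.mul_assoc]
    _ = 0 := trace_mul_eq_zero_of_transpose_eq_neg hskew hS

theorem projected_eq_zero_of_variational [DecidableEq m] [DecidableEq n]
    {B : Matrix n n ℝ} (hB : B.PosDef) {X G : Matrix n m ℝ} (hX : Xᵀ * B * X = 1)
    (h : ∀ Z : Matrix n m ℝ, Zᵀ * B * X + Xᵀ * B * Z = 0 → (Zᵀ * G).trace = 0) :
    (1 - B * X * Xᵀ) * G = 0 := by
  set W := (1 - B * X * Xᵀ) * G
  have hXW : Xᵀ * W = 0 := by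
    rw [← Matrix.mul_assoc, transpose_mul_one_sub_mul_mul_transpose hX, Matrix.zero_mul]
  have hWX : Wᵀ * X = 0 := by
    simpa using congrArg transpose hXW
  have hunit : IsUnit B.det := isUnit_iff_ne_zero.mpr hB.det_pos.ne'
  have hBinvT : B⁻¹ᵀ = B⁻¹ := by
    rw [transpose_nonsing_inv, (isHermitian_iff_isSymm.mp hB.isHermitian).eq]
  have htangent : (B⁻¹ * W)ᵀ * B * X + Xᵀ * B * (B⁻¹ * W) = 0 := by
    rw [transpose_mul, hBinvT, Matrix.mul_assoc Wᵀ, nonsing_inv_mul B hunit, Matrix.mul_one,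
      ← Matrix.mul_assoc (Xᵀ * B), Matrix.mul_assoc Xᵀ, mul_nonsing_inv B hunit, Matrix.mul_one,
      hWX, hXW, add_zero]
  have hG : G = W + B * X * (Xᵀ * G) := by
    simp only [W, Matrix.sub_mul, Matrix.one_mul, Matrix.mul_assoc, sub_add_cancel]
  have hcross : Wᵀ * B⁻¹ * (B * X * (Xᵀ * G)) = 0 := by
    rw [show Wᵀ * B⁻¹ * (B * X * (Xᵀ * G)) = Wᵀ * (B⁻¹ * B) * X * (Xᵀ * G) by
      simp only [Matrix.mul_assoc], nonsing_inv_mul B hunit, Matrix.mul_one, hWX, Matrix.zero_mul]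
  have htrace : ((B⁻¹ * W)ᵀ * G).trace = (Wᵀ * B⁻¹ * W).trace := by
    conv_lhs => rw [hG]
    rw [transpose_mul, hBinvT, Matrix.mul_add, trace_add, hcross, trace_zero, add_zero]
  have hdefinite : (Wᵀ * B⁻¹ * W).trace = 0 ↔ W = 0 := by
    simpa only [conjTranspose_eq_transpose_of_trivial] using
      hB.inv.trace_conjTranspose_mul_mul_same_eq_zero_iff (W := W)
  exact hdefinite.mp (htrace ▸ h _ htangent)

end

theorem variational_iff_projected (n p : ℕ)
    (B : Matrix (Fin n) (Fin n) ℝ) (hB : B.PosDef)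
    (X : Matrix (Fin n) (Fin p) ℝ) (hX : Xᵀ * B * X = 1)
    (G : Matrix (Fin n) (Fin p) ℝ) (hsym : Xᵀ * G = Gᵀ * X) :
    (∀ Z : Matrix (Fin n) (Fin p) ℝ, Zᵀ * B * X + Xᵀ * B * Z = 0 → (Zᵀ * G).trace = 0)
    ↔ (1 - B * X * Xᵀ) * G = 0 :=
  ⟨projected_eq_zero_of_variational hB hX, fun hG _ hZ ↦
    variational_of_projected (isHermitian_iff_isSymm.mp hB.isHermitian) hsym hG hZ⟩
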